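/- Let n ≥ 2. The canonical monoid homomorphism from the braid monoid B_n^+ (presented as a monoid by generators σ_1, …, σ_{n−1} and the braid relations) to the Artin braid group B_n, sending each monoid generator σ_i to the group generator σ_i, is injective. Equivalently (Garside), any two positive braid words that represent the same element of B_n are positively equivalent, i.e., they represent the same element of the presented monoid. -/

import Mathlib

/-- The braid relations on the free group on `m` generators, as relator words:
`σᵢσⱼσᵢ⁻¹σⱼ⁻¹` for `|i - j| ≥ 2` and `σᵢσⱼσᵢ(σⱼσᵢσⱼ)⁻¹` for `j = i + 1`. -/
def braidRels (m : ℕ) : Set (FreeGroup (Fin m)) :=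
  { r | ∃ i j : Fin m,
      ((i : ℕ) + 2 ≤ (j : ℕ) ∧
        r = .of i * .of j * (.of i)⁻¹ * (.of j)⁻¹) ∨
      ((j : ℕ) = (i : ℕ) + 1 ∧
        r = .of i * .of j * .of i * (.of j * .of i * .of j)⁻¹) }

/-- The Artin braid group `B_n`, presented over `Fin (n - 1)`. -/
def BraidGroup (n : ℕ) : Type := PresentedGroup (braidRels (n - 1))

instance (n : ℕ) : Group (BraidGroup n) := by unfold BraidGroup; infer_instance

/-- The standard Artin generator `σ_{i+1}` (0-indexed by `i : Fin (n - 1)`,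
so `braidGen n ⟨0, _⟩` is `σ_1`). -/
def braidGen (n : ℕ) (i : Fin (n - 1)) : BraidGroup n := PresentedGroup.of i

/-- The braid relations on the free monoid on `m` generators:
`σᵢσⱼ = σⱼσᵢ` for `|i - j| ≥ 2` and `σᵢσⱼσᵢ = σⱼσᵢσⱼ` for `j = i + 1`. -/
def braidMonoidRels (m : ℕ) : FreeMonoid (Fin m) → FreeMonoid (Fin m) → Prop :=
  fun a b => ∃ i j : Fin m,
    ((i : ℕ) + 2 ≤ (j : ℕ) ∧ a = .of i * .of j ∧ b = .of j * .of i) ∨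
    ((j : ℕ) = (i : ℕ) + 1 ∧ a = .of i * .of j * .of i ∧ b = .of j * .of i * .of j)

/-- The braid monoid `B_n⁺`, presented over `Fin (n - 1)`. -/
def BraidMonoid (n : ℕ) : Type := PresentedMonoid (braidMonoidRels (n - 1))

instance (n : ℕ) : Monoid (BraidMonoid n) := by unfold BraidMonoid; infer_instance

/-- The positive generator `σ_{i+1}` of the braid monoid (0-indexed by `i : Fin (n - 1)`). -/
def braidMonGen (n : ℕ) (i : Fin (n - 1)) : BraidMonoid n :=
  PresentedMonoid.of (braidMonoidRels (n - 1)) i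


/-!
Garside's proof. Positive words are lists of letters `i : ℕ`, the letter `i` standing for
`σ_{i+1}`. By induction on length, if `i :: u` and `j :: v` are positively equivalent then either
`i = j` and `u, v` are equivalent, or `u` and `v` continue into the common multiple
`i :: lcmTail i j ≈ j :: lcmTail j i`. In particular the braid monoid is left cancellative, and
right cancellative by reversing words. The fundamental braid `Δ` is right divisible by every
generator and satisfies `Δ σᵢ = σ_{n-i} Δ`, so every element right divides a power of `Δ` and any
two elements have a common left multiple. A cancellative monoid with common left multiples embeds in
its group of fractions (an Ore localization), and the embedding factors through `B_n`, since every
monoid hom from `B_n⁺` to a group extends to `B_n`.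
-/

universe u

section OreEmbedding

open OreLocalization

variable {M : Type u} [Monoid M]

noncomputable abbrev oreSetTopOfExistsMulEq [IsRightCancelMul M]
    (h : ∀ x y : M, ∃ a b, a * x = b * y) : OreSet (⊤ : Submonoid M) where
  ore_right_cancel _ _ _ hr := ⟨1, by rw [mul_right_cancel hr]⟩
  oreNum x s := (h x s).choose_spec.choose
  oreDenom x s := ⟨(h x s).choose, trivial⟩
  ore_eq x s := (h x s).choose_spec.choose_spec

theorem exists_injective_monoidHom_group [IsCancelMul M] (h : ∀ x y : M, ∃ a b, a * x = b * y) :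
    ∃ (G : Type u) (_ : Group G) (ι : M →* G), Function.Injective ι := by
  let := oreSetTopOfExistsMulEq h
  refine ⟨(OreLocalization (⊤ : Submonoid M) M)ˣ, inferInstance,
    Units.liftRight numeratorHom (fun x => numeratorUnit ⟨x, trivial⟩) fun _ => rfl,
    fun x y hxy => ?_⟩
  obtain ⟨u, v, h1, h2⟩ := oreDiv_eq_iff.1 (congrArg Units.val hxy)
  have huv : (u : M) = v := by simpa using h2
  have h1' : (u : M) * y = v * x := h1
  rw [huv] at h1'
  exact (mul_left_cancel h1').symm

end OreEmbedding

namespace BraidMonoid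

variable {m : ℕ}

theorem of_mul_of_comm {i j : Fin m} (h : (i : ℕ) + 2 ≤ j) :
    PresentedMonoid.of (braidMonoidRels m) i * .of _ j = .of _ j * .of _ i :=
  PresentedMonoid.mk_eq_mk_of_rel ⟨i, j, .inl ⟨h, rfl, rfl⟩⟩

theorem of_braid {i j : Fin m} (h : (j : ℕ) = i + 1) :
    PresentedMonoid.of (braidMonoidRels m) i * .of _ j * .of _ i = .of _ j * .of _ i * .of _ j :=
  PresentedMonoid.mk_eq_mk_of_rel ⟨i, j, .inr ⟨h, rfl, rfl⟩⟩

def groupLift {G : Type*} [Group G] (f : PresentedMonoid (braidMonoidRels m) →* G) :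
    PresentedGroup (braidRels m) →* G :=
  PresentedGroup.toGroup (f := fun i => f (.of _ i)) <| by
    rintro r ⟨i, j, ⟨hij, rfl⟩ | ⟨hij, rfl⟩⟩
    · have h := congrArg f (of_mul_of_comm hij)
      simp only [map_mul] at h
      simp only [map_mul, map_inv, FreeGroup.lift_apply_of, h]
      group
    · have h := congrArg f (of_braid hij)
      simp only [map_mul] at h
      simp only [map_mul, map_inv, FreeGroup.lift_apply_of, h, mul_inv_cancel]

theorem groupLift_of {G : Type*} [Group G] (f : PresentedMonoid (braidMonoidRels m) →* G)
    (i : Fin m) : groupLift f (PresentedGroup.of i) = f (.of _ i) :=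
  PresentedGroup.toGroup.of _

end BraidMonoid

namespace BraidWord

open BraidMonoid

def Far (i j : ℕ) : Prop := i + 2 ≤ j ∨ j + 2 ≤ i

def Near (i j : ℕ) : Prop := i + 1 = j ∨ j + 1 = i

instance (i j : ℕ) : Decidable (Near i j) := inferInstanceAs (Decidable (_ ∨ _))

variable {i j k : ℕ}

theorem Far.symm (h : Far i j) : Far j i := Or.symm h

theorem Near.symm (h : Near i j) : Near j i := Or.symm h

theorem Far.ne (h : Far i j) : i ≠ j := by unfold Far at h; omega

theorem Near.ne (h : Near i j) : i ≠ j := by unfold Near at h; omega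

theorem Far.not_near (h : Far i j) : ¬Near i j := by unfold Far Near at *; omega

theorem far_or_near_of_ne (h : i ≠ j) : Far i j ∨ Near i j := by unfold Far Near; omega

theorem far_of_near_of_near (hik : Near i k) (hkj : Near k j) (hij : i ≠ j) : Far i j := by
  unfold Near at *; unfold Far; omega

inductive Step : List ℕ → List ℕ → Prop
  | swap {i j : ℕ} (p q : List ℕ) : Far i j → Step (p ++ i :: j :: q) (p ++ j :: i :: q)
  | braid {i j : ℕ} (p q : List ℕ) : Near i j →
      Step (p ++ i :: j :: i :: q) (p ++ j :: i :: j :: q)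

def PosEquiv : List ℕ → List ℕ → Prop := Relation.ReflTransGen Step

local infix:50 " ≈ₚ " => PosEquiv

variable {u v w x y : List ℕ}

namespace Step

theorem symm : Step u v → Step v u
  | swap p q h => swap p q h.symm
  | braid p q h => braid p q h.symm

theorem append_left (t : List ℕ) : Step u v → Step (t ++ u) (t ++ v)
  | swap p q h => by simpa using swap (t ++ p) q h
  | braid p q h => by simpa using braid (t ++ p) q h

theorem append_right (t : List ℕ) : Step u v → Step (u ++ t) (v ++ t)
  | swap p q h => by simpa using swap p (q ++ t) h
  | braid p q h => by simpa using braid p (q ++ t) h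

theorem reverse : Step u v → Step u.reverse v.reverse
  | swap p q h => by simpa using swap q.reverse p.reverse h.symm
  | braid p q h => by simpa using braid q.reverse p.reverse h

theorem map_add (t : ℕ) : Step u v → Step (u.map (· + t)) (v.map (· + t))
  | swap p q h => by simpa using swap (p.map (· + t)) (q.map (· + t)) (by unfold Far at *; omega)
  | braid p q h => by simpa using braid (p.map (· + t)) (q.map (· + t)) (by unfold Near at *; omega)

theorem length_eq : Step u v → u.length = v.length
  | swap p q _ | braid p q _ => by simp

theorem subset : Step u v → v ⊆ u
  | swap p q _ | braid p q _ => fun x => by simp only [List.mem_append, List.mem_cons]; tauto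

theorem cons_cases {a : ℕ} (h : Step (a :: u) x) :
    (∃ u', x = a :: u' ∧ Step u u') ∨ (∃ k q, Far a k ∧ u = k :: q ∧ x = k :: a :: q) ∨
      ∃ k q, Near a k ∧ u = k :: a :: q ∧ x = k :: a :: k :: q := by
  generalize hx : a :: u = y at h
  cases h with
  | swap p q hf =>
    cases p with
    | nil =>
      simp only [List.nil_append, List.cons.injEq] at hx
      obtain ⟨rfl, rfl⟩ := hx
      exact .inr (.inl ⟨_, q, hf, rfl, rfl⟩)
    | cons b p =>
      simp only [List.cons_append, List.cons.injEq] at hx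
      obtain ⟨rfl, rfl⟩ := hx
      exact .inl ⟨_, rfl, .swap p q hf⟩
  | braid p q hn =>
    cases p with
    | nil =>
      simp only [List.nil_append, List.cons.injEq] at hx
      obtain ⟨rfl, rfl⟩ := hx
      exact .inr (.inr ⟨_, q, hn, rfl, rfl⟩)
    | cons b p =>
      simp only [List.cons_append, List.cons.injEq] at hx
      obtain ⟨rfl, rfl⟩ := hx
      exact .inl ⟨_, rfl, .braid p q hn⟩

theorem posEquiv (h : Step u v) : u ≈ₚ v := Relation.ReflTransGen.single h

end Step

namespace PosEquiv

theorem rfl : u ≈ₚ u := Relation.ReflTransGen.refl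

theorem trans (h : u ≈ₚ v) (h' : v ≈ₚ w) : u ≈ₚ w := Relation.ReflTransGen.trans h h'

instance : Trans PosEquiv PosEquiv PosEquiv := ⟨trans⟩

theorem symm (h : u ≈ₚ v) : v ≈ₚ u := by
  induction h with
  | refl => exact rfl
  | tail _ hs ih => exact hs.symm.posEquiv.trans ih

theorem append_left (t : List ℕ) (h : u ≈ₚ v) : t ++ u ≈ₚ t ++ v :=
  Relation.ReflTransGen.lift (t ++ ·) (fun _ _ (hs : Step _ _) => hs.append_left t) _ _ h

theorem append_right (t : List ℕ) (h : u ≈ₚ v) : u ++ t ≈ₚ v ++ t :=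
  Relation.ReflTransGen.lift (· ++ t) (fun _ _ (hs : Step _ _) => hs.append_right t) _ _ h

theorem append (h : u ≈ₚ v) (h' : x ≈ₚ y) : u ++ x ≈ₚ v ++ y :=
  (h.append_right x).trans (h'.append_left v)

theorem cons (a : ℕ) (h : u ≈ₚ v) : a :: u ≈ₚ a :: v := h.append_left [a]

theorem reverse (h : u ≈ₚ v) : u.reverse ≈ₚ v.reverse :=
  Relation.ReflTransGen.lift List.reverse (fun _ _ (hs : Step _ _) => hs.reverse) _ _ h

theorem map_add (t : ℕ) (h : u ≈ₚ v) : u.map (· + t) ≈ₚ v.map (· + t) :=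
  Relation.ReflTransGen.lift (List.map (· + t)) (fun _ _ (hs : Step _ _) => hs.map_add t) _ _ h

theorem length_eq (h : u ≈ₚ v) : u.length = v.length := by
  induction h with
  | refl => exact Eq.refl _
  | tail _ hs ih => exact ih.trans hs.length_eq

theorem subset (h : u ≈ₚ v) : v ⊆ u := by
  induction h with
  | refl => exact List.Subset.refl _
  | tail _ hs ih => exact List.Subset.trans hs.subset ih

theorem swap (h : Far i j) (t : List ℕ) : i :: j :: t ≈ₚ j :: i :: t :=
  (Step.swap [] t h).posEquiv

theorem braid (h : Near i j) (t : List ℕ) : i :: j :: i :: t ≈ₚ j :: i :: j :: t :=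
  (Step.braid [] t h).posEquiv

theorem cons_append_of_far {c : ℕ} {l : List ℕ} (h : ∀ x ∈ l, Far c x) (t : List ℕ) :
    c :: (l ++ t) ≈ₚ l ++ c :: t := by
  induction l with
  | nil => exact rfl
  | cons x l ih =>
    exact (swap (h x (by simp)) _).trans ((ih fun y hy => h y (by simp [hy])).cons x)

theorem append_singleton_of_far {c : ℕ} {l : List ℕ} (h : ∀ x ∈ l, Far c x) :
    l ++ [c] ≈ₚ c :: l := by
  simpa using (cons_append_of_far h []).symm

end PosEquiv

/-- `i :: lcmTail i j` is the least common right multiple of the letters `i ≠ j`. -/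
def lcmTail (i j : ℕ) : List ℕ := if Near i j then [j, i] else [j]

theorem lcmTail_of_far (h : Far i j) : lcmTail i j = [j] := if_neg h.not_near

theorem lcmTail_of_near (h : Near i j) : lcmTail i j = [j, i] := if_pos h

theorem far_of_mem_lcmTail (hi : Far k i) (hj : Far k j) : ∀ x ∈ lcmTail i j, Far k x := by
  unfold lcmTail; split <;> simp [hi, hj]

def FactorsThroughLcm (i j : ℕ) (u v : List ℕ) : Prop :=
  (i = j ∧ u ≈ₚ v) ∨ (i ≠ j ∧ ∃ w, u ≈ₚ lcmTail i j ++ w ∧ v ≈ₚ lcmTail j i ++ w)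

namespace FactorsThroughLcm

theorem congr (h : FactorsThroughLcm i j u v) (hu : u ≈ₚ x) (hv : v ≈ₚ y) :
    FactorsThroughLcm i j x y := by
  rcases h with ⟨hij, h⟩ | ⟨hij, w, h1, h2⟩
  · exact .inl ⟨hij, hu.symm.trans (h.trans hv)⟩
  · exact .inr ⟨hij, w, hu.symm.trans h1, hv.symm.trans h2⟩

theorem of_far (hij : Far i j) (hu : u ≈ₚ j :: w) (hv : v ≈ₚ i :: w) :
    FactorsThroughLcm i j u v :=
  .inr ⟨hij.ne, w, by rwa [lcmTail_of_far hij], by rwa [lcmTail_of_far hij.symm]⟩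

theorem of_near (hij : Near i j) (hu : u ≈ₚ j :: i :: w) (hv : v ≈ₚ i :: j :: w) :
    FactorsThroughLcm i j u v :=
  .inr ⟨hij.ne, w, by rwa [lcmTail_of_near hij], by rwa [lcmTail_of_near hij.symm]⟩

end FactorsThroughLcm

def LcmPropertyBelow (N : ℕ) : Prop :=
  ∀ i j u v, u.length < N → i :: u ≈ₚ j :: v → FactorsThroughLcm i j u v

namespace LcmPropertyBelow

variable {N : ℕ} {q : List ℕ}

theorem cancel (ih : LcmPropertyBelow N) (h : i :: u ≈ₚ i :: v) (hu : u.length < N) : u ≈ₚ v := by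
  rcases ih i i u v hu h with ⟨-, h⟩ | ⟨hii, -⟩
  exacts [h, absurd rfl hii]

theorem exists_lcm (ih : LcmPropertyBelow N) (hij : i ≠ j) (h : i :: u ≈ₚ j :: v)
    (hu : u.length < N) : ∃ w, u ≈ₚ lcmTail i j ++ w ∧ v ≈ₚ lcmTail j i ++ w := by
  rcases ih i j u v hu h with ⟨hij', -⟩ | ⟨-, hw⟩
  exacts [absurd hij' hij, hw]

theorem exists_of_far (ih : LcmPropertyBelow N) (hij : Far i j) (h : i :: u ≈ₚ j :: v)
    (hu : u.length < N) : ∃ w, u ≈ₚ j :: w ∧ v ≈ₚ i :: w := by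
  simpa only [lcmTail_of_far hij, lcmTail_of_far hij.symm, List.singleton_append]
    using ih.exists_lcm hij.ne h hu

theorem exists_of_near (ih : LcmPropertyBelow N) (hij : Near i j) (h : i :: u ≈ₚ j :: v)
    (hu : u.length < N) : ∃ w, u ≈ₚ j :: i :: w ∧ v ≈ₚ i :: j :: w := by
  simpa only [lcmTail_of_near hij, lcmTail_of_near hij.symm, List.cons_append,
    List.nil_append] using ih.exists_lcm hij.ne h hu

/- The four cases of the induction step: the chain from `i :: …` to `j :: v` begins with a swap
(resp. braid move) of `i` with the next letter `k`, and the rest of the chain, from `k :: …`,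
factors through the common multiple of `k` and `j`, according as `k, j` are far or near. -/
theorem swap_far (ih : LcmPropertyBelow N) (hik : Far i k) (hkj : Far k j) (hq : q.length < N)
    (h1 : i :: q ≈ₚ j :: w) (h2 : v ≈ₚ k :: w) : FactorsThroughLcm i j (k :: q) v := by
  by_cases hij : i = j
  · subst hij
    exact .inl ⟨rfl, ((ih.cancel h1 hq).cons k).trans h2.symm⟩
  obtain ⟨z, hz1, hz2⟩ := ih.exists_lcm hij h1 hq
  refine .inr ⟨hij, k :: z, ?_, ?_⟩
  · exact (hz1.cons k).trans (.cons_append_of_far (far_of_mem_lcmTail hik.symm hkj) z)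
  · exact h2.trans ((hz2.cons k).trans (.cons_append_of_far (far_of_mem_lcmTail hkj hik.symm) z))

theorem swap_near (ih : LcmPropertyBelow N) (hik : Far i k) (hkj : Near k j) (hq : q.length < N)
    (h1 : i :: q ≈ₚ j :: k :: w) (h2 : v ≈ₚ k :: j :: w) : FactorsThroughLcm i j (k :: q) v := by
  have hij : i ≠ j := by rintro rfl; exact hik.not_near hkj.symm
  have hqw : q.length = w.length + 1 := by simpa using h1.length_eq
  rcases far_or_near_of_ne hij with hij | hij
  · obtain ⟨z, hz1, hz2⟩ := ih.exists_of_far hij h1 hq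
    obtain ⟨y, hy1, hy2⟩ := ih.exists_of_far hik.symm hz2 (by omega)
    refine .of_far hij (w := k :: j :: y) ?_ ?_
    · calc k :: q ≈ₚ k :: j :: k :: y := (hz1.trans (hy2.cons j)).cons k
        _ ≈ₚ j :: k :: j :: y := .braid hkj y
    · calc v ≈ₚ k :: j :: i :: y := h2.trans ((hy1.cons j).cons k)
        _ ≈ₚ k :: i :: j :: y := (PosEquiv.swap hij.symm y).cons k
        _ ≈ₚ i :: k :: j :: y := .swap hik.symm _
  · obtain ⟨z, hz1, hz2⟩ := ih.exists_of_near hij h1 hq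
    obtain ⟨y, hy1, hy2⟩ := ih.exists_of_far hik.symm hz2 (by omega)
    have hqz : q.length = z.length + 2 := by simpa using hz1.length_eq
    obtain ⟨t, ht1, ht2⟩ := ih.exists_of_near hkj.symm hy2 (by omega)
    refine .of_near hij (w := k :: j :: i :: t) ?_ ?_
    · calc k :: q ≈ₚ k :: j :: i :: k :: j :: t := (hz1.trans ((ht1.cons i).cons j)).cons k
        _ ≈ₚ k :: j :: k :: i :: j :: t := ((PosEquiv.swap hik (j :: t)).cons j).cons k
        _ ≈ₚ j :: k :: j :: i :: j :: t := .braid hkj _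
        _ ≈ₚ j :: k :: i :: j :: i :: t := ((PosEquiv.braid hij.symm t).cons k).cons j
        _ ≈ₚ j :: i :: k :: j :: i :: t := (PosEquiv.swap hik.symm _).cons j
    · calc v ≈ₚ k :: j :: i :: j :: k :: t := h2.trans (((hy1.trans (ht2.cons i)).cons j).cons k)
        _ ≈ₚ k :: i :: j :: i :: k :: t := (PosEquiv.braid hij.symm _).cons k
        _ ≈ₚ i :: k :: j :: i :: k :: t := .swap hik.symm _
        _ ≈ₚ i :: k :: j :: k :: i :: t := (((PosEquiv.swap hik t).cons j).cons k).cons i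
        _ ≈ₚ i :: j :: k :: j :: i :: t := (PosEquiv.braid hkj _).cons i

theorem braid_far (ih : LcmPropertyBelow N) (hik : Near i k) (hkj : Far k j)
    (hq : q.length + 1 < N) (h1 : i :: k :: q ≈ₚ j :: w) (h2 : v ≈ₚ k :: w) :
    FactorsThroughLcm i j (k :: i :: q) v := by
  have hij : i ≠ j := by rintro rfl; exact hkj.symm.not_near hik
  rcases far_or_near_of_ne hij with hij | hij
  · obtain ⟨z, hz1, hz2⟩ := ih.exists_of_far hij h1 hq
    obtain ⟨y, hy1, hy2⟩ := ih.exists_of_far hkj hz1 (by omega)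
    refine .of_far hij (w := k :: i :: y) ?_ ?_
    · calc k :: i :: q ≈ₚ k :: i :: j :: y := (hy1.cons i).cons k
        _ ≈ₚ k :: j :: i :: y := (PosEquiv.swap hij y).cons k
        _ ≈ₚ j :: k :: i :: y := .swap hkj _
    · calc v ≈ₚ k :: i :: k :: y := h2.trans ((hz2.trans (hy2.cons i)).cons k)
        _ ≈ₚ i :: k :: i :: y := .braid hik.symm y
  · obtain ⟨z, hz1, hz2⟩ := ih.exists_of_near hij h1 hq
    obtain ⟨y, hy1, hy2⟩ := ih.exists_of_far hkj hz1 (by omega)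
    have hqz : q.length + 1 = z.length + 2 := by simpa using hz1.length_eq
    obtain ⟨t, ht1, ht2⟩ := ih.exists_of_near hik hy2 (by omega)
    refine .of_near hij (w := k :: i :: j :: t) ?_ ?_
    · calc k :: i :: q ≈ₚ k :: i :: j :: i :: k :: t := ((hy1.trans (ht2.cons j)).cons i).cons k
        _ ≈ₚ k :: j :: i :: j :: k :: t := (PosEquiv.braid hij _).cons k
        _ ≈ₚ k :: j :: i :: k :: j :: t := (((PosEquiv.swap hkj.symm t).cons i).cons j).cons k
        _ ≈ₚ j :: k :: i :: k :: j :: t := .swap hkj _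
        _ ≈ₚ j :: i :: k :: i :: j :: t := (PosEquiv.braid hik.symm _).cons j
    · calc v ≈ₚ k :: i :: j :: k :: i :: t := h2.trans ((hz2.trans ((ht1.cons j).cons i)).cons k)
        _ ≈ₚ k :: i :: k :: j :: i :: t := ((PosEquiv.swap hkj.symm _).cons i).cons k
        _ ≈ₚ i :: k :: i :: j :: i :: t := .braid hik.symm _
        _ ≈ₚ i :: k :: j :: i :: j :: t := ((PosEquiv.braid hij t).cons k).cons i
        _ ≈ₚ i :: j :: k :: i :: j :: t := (PosEquiv.swap hkj _).cons i

theorem braid_near (ih : LcmPropertyBelow N) (hik : Near i k) (hkj : Near k j)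
    (hq : q.length + 1 < N) (h1 : i :: k :: q ≈ₚ j :: k :: w) (h2 : v ≈ₚ k :: j :: w) :
    FactorsThroughLcm i j (k :: i :: q) v := by
  by_cases hij : i = j
  · subst hij
    have hqw : q ≈ₚ w := ih.cancel (ih.cancel h1 hq) (by omega)
    exact .inl ⟨rfl, ((hqw.cons i).cons k).trans h2.symm⟩
  replace hij := far_of_near_of_near hik hkj hij
  have hqw : q.length = w.length := by simpa using h1.length_eq
  obtain ⟨z, hz1, hz2⟩ := ih.exists_of_far hij h1 hq
  obtain ⟨y, hy1, hy2⟩ := ih.exists_of_near hkj hz1 (by omega)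
  obtain ⟨t, ht1, ht2⟩ := ih.exists_of_near hik.symm hz2 (by omega)
  have hqy : q.length = y.length + 2 := by simpa using hy1.length_eq
  obtain ⟨s, hs1, hs2⟩ :=
    ih.exists_of_far hij.symm (ih.cancel (hy2.symm.trans ht2) (by rw [List.length_cons]; omega))
      (by omega)
  refine .of_far hij (w := k :: j :: i :: k :: s) ?_ ?_
  · calc k :: i :: q ≈ₚ k :: i :: j :: k :: i :: s :=
          ((hy1.trans ((hs1.cons k).cons j)).cons i).cons k
      _ ≈ₚ k :: j :: i :: k :: i :: s := (PosEquiv.swap hij _).cons k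
      _ ≈ₚ k :: j :: k :: i :: k :: s := ((PosEquiv.braid hik s).cons j).cons k
      _ ≈ₚ j :: k :: j :: i :: k :: s := .braid hkj _
  · calc v ≈ₚ k :: j :: i :: k :: j :: s :=
          h2.trans (((ht1.trans ((hs2.cons k).cons i)).cons j).cons k)
      _ ≈ₚ k :: i :: j :: k :: j :: s := (PosEquiv.swap hij.symm _).cons k
      _ ≈ₚ k :: i :: k :: j :: k :: s := ((PosEquiv.braid hkj.symm s).cons i).cons k
      _ ≈ₚ i :: k :: i :: j :: k :: s := .braid hik.symm _
      _ ≈ₚ i :: k :: j :: i :: k :: s := ((PosEquiv.swap hij _).cons k).cons i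

theorem swap (ih : LcmPropertyBelow N) (hik : Far i k) (hq : q.length < N)
    (h : FactorsThroughLcm k j (i :: q) v) : FactorsThroughLcm i j (k :: q) v := by
  rcases h with ⟨rfl, h⟩ | ⟨hkj, w, h1, h2⟩
  · exact .of_far hik .rfl h.symm
  rcases far_or_near_of_ne hkj with hkj | hkj
  · rw [lcmTail_of_far hkj] at h1
    rw [lcmTail_of_far hkj.symm] at h2
    exact ih.swap_far hik hkj hq h1 h2
  · rw [lcmTail_of_near hkj] at h1
    rw [lcmTail_of_near hkj.symm] at h2
    exact ih.swap_near hik hkj hq h1 h2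

theorem braid (ih : LcmPropertyBelow N) (hik : Near i k) (hq : q.length + 1 < N)
    (h : FactorsThroughLcm k j (i :: k :: q) v) : FactorsThroughLcm i j (k :: i :: q) v := by
  rcases h with ⟨rfl, h⟩ | ⟨hkj, w, h1, h2⟩
  · exact .of_near hik .rfl h.symm
  rcases far_or_near_of_ne hkj with hkj | hkj
  · rw [lcmTail_of_far hkj] at h1
    rw [lcmTail_of_far hkj.symm] at h2
    exact ih.braid_far hik hkj hq h1 h2
  · rw [lcmTail_of_near hkj] at h1
    rw [lcmTail_of_near hkj.symm] at h2
    exact ih.braid_near hik hkj hq h1 h2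

theorem succ (ih : LcmPropertyBelow N) : LcmPropertyBelow (N + 1) := by
  intro i j u v hu h
  suffices ∀ x, x ≈ₚ j :: v → ∀ i u, x = i :: u → u.length ≤ N → FactorsThroughLcm i j u v from
    this _ h i u rfl (by omega)
  intro x hx
  induction hx using Relation.ReflTransGen.head_induction_on with
  | refl =>
    intro i u hx _
    obtain ⟨rfl, rfl⟩ := List.cons.inj hx
    exact .inl ⟨rfl, .rfl⟩
  | head hs _ ihs =>
    rintro i u rfl hu
    rcases hs.cons_cases with ⟨u', rfl, hu'⟩ | ⟨k, q, hik, rfl, rfl⟩ | ⟨k, q, hik, rfl, rfl⟩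
    · exact (ihs i u' rfl (hu'.length_eq ▸ hu)).congr hu'.symm.posEquiv .rfl
    · simp only [List.length_cons] at hu
      exact ih.swap hik (by omega) (ihs k (i :: q) rfl (by simpa using hu))
    · simp only [List.length_cons] at hu
      exact ih.braid hik (by omega) (ihs k (i :: k :: q) rfl (by simpa using hu))

end LcmPropertyBelow

theorem lcmPropertyBelow (N : ℕ) : LcmPropertyBelow N := by
  induction N with
  | zero => exact fun _ _ _ _ hu => absurd hu (Nat.not_lt_zero _)
  | succ N ih => exact ih.succ

namespace PosEquiv

theorem cancel_cons (h : i :: u ≈ₚ i :: v) : u ≈ₚ v :=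
  (lcmPropertyBelow _).cancel h (Nat.lt_succ_self _)

theorem cancel_left {t : List ℕ} (h : t ++ u ≈ₚ t ++ v) : u ≈ₚ v := by
  induction t with
  | nil => exact h
  | cons a t ih => exact ih h.cancel_cons

theorem cancel_right {t : List ℕ} (h : u ++ t ≈ₚ v ++ t) : u ≈ₚ v := by
  have := (cancel_left (t := t.reverse) (by simpa using h.reverse)).reverse
  rwa [List.reverse_reverse, List.reverse_reverse] at this

end PosEquiv


theorem map_add_one_range' (s n : ℕ) : (List.range' s n).map (· + 1) = List.range' (s + 1) n := by
  simpa [add_comm] using List.map_add_range' (a := 1) s n 1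

theorem reverse_range'_succ (s n : ℕ) :
    (List.range' s (n + 1)).reverse = (s + n) :: (List.range' s n).reverse := by
  simp [List.range'_1_concat]

theorem reverse_range'_append_singleton {s k b : ℕ} (hs : s ≤ b) (hk : b + 1 < s + k) :
    (List.range' s k).reverse ++ [b + 1] ≈ₚ b :: (List.range' s k).reverse := by
  induction k with
  | zero => omega
  | succ k ih =>
    rw [reverse_range'_succ, List.cons_append]
    rcases Nat.lt_or_ge (b + 1) (s + k) with hlt | hge
    · exact ((ih hlt).cons _).trans (.swap (by unfold Far; omega) _)
    obtain ⟨k, rfl⟩ : ∃ k', k = k' + 1 := ⟨k - 1, by omega⟩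
    obtain rfl : b = s + k := by omega
    have hR : ∀ x ∈ (List.range' s k).reverse, Far (s + k + 1) x := by
      intro x hx
      simp only [List.mem_reverse, List.mem_range'_1] at hx
      unfold Far; omega
    rw [reverse_range'_succ, List.cons_append]
    calc _ ≈ₚ (s + k + 1) :: (s + k) :: (s + k + 1) :: (List.range' s k).reverse :=
          ((PosEquiv.append_singleton_of_far hR).cons _).cons _
      _ ≈ₚ _ := .braid (by unfold Near; omega) _

theorem range'_append_singleton {s k b : ℕ} (hs : s ≤ b) (hk : b + 1 < s + k) :
    List.range' s k ++ [b] ≈ₚ (b + 1) :: List.range' s k := by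
  induction k generalizing s with
  | zero => omega
  | succ k ih =>
    rw [List.range'_succ, List.cons_append]
    rcases Nat.lt_or_ge s b with hlt | hge
    · exact ((ih hlt (by omega)).cons s).trans (.swap (by unfold Far; omega) _)
    obtain rfl : s = b := by omega
    obtain ⟨k, rfl⟩ : ∃ k', k = k' + 1 := ⟨k - 1, by omega⟩
    have hR : ∀ x ∈ List.range' (s + 1 + 1) k, Far s x := by
      intro x hx
      simp only [List.mem_range'_1] at hx
      unfold Far; omega
    rw [List.range'_succ, List.cons_append]
    calc _ ≈ₚ s :: (s + 1) :: s :: List.range' (s + 1 + 1) k :=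
          ((PosEquiv.append_singleton_of_far hR).cons _).cons _
      _ ≈ₚ _ := .braid (by unfold Near; omega) _

theorem range'_append_reverse_range' (m : ℕ) :
    List.range' 0 m ++ (List.range' 0 (m + 1)).reverse ≈ₚ
      (List.range' 1 m).reverse ++ List.range' 0 (m + 1) := by
  induction m with
  | zero => exact .rfl
  | succ m ih =>
    set A := List.range' 0 m
    have hA : ∀ x ∈ A, Far (m + 1) x := by
      intro x hx
      simp only [A, List.mem_range'_1] at hx
      unfold Far; omega
    have hA' : ∀ x ∈ A.reverse, Far (m + 1) x := by simpa using hA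
    calc List.range' 0 (m + 1) ++ (List.range' 0 (m + 2)).reverse
        = A ++ m :: (m + 1) :: m :: A.reverse := by simp [A, List.range'_1_concat]
      _ ≈ₚ A ++ (m + 1) :: m :: (m + 1) :: A.reverse :=
          (PosEquiv.braid (by unfold Near; omega) _).append_left A
      _ ≈ₚ (m + 1) :: (A ++ m :: (m + 1) :: A.reverse) := (PosEquiv.cons_append_of_far hA _).symm
      _ ≈ₚ (m + 1) :: (A ++ m :: (A.reverse ++ [m + 1])) :=
          ((((PosEquiv.append_singleton_of_far hA').symm).cons m).append_left A).cons _
      _ = (m + 1) :: ((A ++ (List.range' 0 (m + 1)).reverse) ++ [m + 1]) := by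
          simp [A, List.range'_1_concat]
      _ ≈ₚ (m + 1) :: ((List.range' 1 m).reverse ++ List.range' 0 (m + 1) ++ [m + 1]) :=
          (ih.append_right _).cons _
      _ = (List.range' 1 (m + 1)).reverse ++ List.range' 0 (m + 2) := by
          simp [List.range'_1_concat, Nat.add_comm 1 m]

/-- Garside's fundamental braid `Δ` of `B_{m+1}⁺`. -/
def delta : ℕ → List ℕ
  | 0 => []
  | m + 1 => delta m ++ (List.range' 0 (m + 1)).reverse

theorem lt_of_mem_delta {m x : ℕ} (h : x ∈ delta m) : x < m := by
  induction m with
  | zero => simp [delta] at h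
  | succ m ih =>
    simp only [delta, List.mem_append, List.mem_reverse, List.mem_range'_1] at h
    rcases h with h | h
    · exact (ih h).trans (Nat.lt_succ_self m)
    · omega

theorem delta_succ_posEquiv (m : ℕ) :
    delta (m + 1) ≈ₚ (delta m).map (· + 1) ++ List.range' 0 (m + 1) := by
  induction m with
  | zero => exact .rfl
  | succ m ih =>
    calc delta (m + 2) = delta (m + 1) ++ (List.range' 0 (m + 2)).reverse := rfl
      _ ≈ₚ (delta m).map (· + 1) ++ (List.range' 0 (m + 1) ++ (List.range' 0 (m + 2)).reverse) := by
          simpa using ih.append_right (List.range' 0 (m + 2)).reverse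
      _ ≈ₚ (delta m).map (· + 1) ++ ((List.range' 1 (m + 1)).reverse ++ List.range' 0 (m + 2)) :=
          (range'_append_reverse_range' (m + 1)).append_left _
      _ = (delta (m + 1)).map (· + 1) ++ List.range' 0 (m + 2) := by
          simp [delta, map_add_one_range', List.map_reverse]

theorem delta_append_singleton {m i j : ℕ} (h : i + j + 1 = m) :
    delta m ++ [i] ≈ₚ j :: delta m := by
  induction m generalizing i j with
  | zero => omega
  | succ m ih =>
    rcases i with _ | i
    · obtain rfl : j = m := by omega
      rcases j with _ | m
      · exact .rfl
      calc delta (m + 2) ++ [0]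
          ≈ₚ (delta (m + 1)).map (· + 1) ++ (List.range' 0 (m + 2) ++ [0]) := by
            simpa using (delta_succ_posEquiv (m + 1)).append_right [0]
        _ ≈ₚ (delta (m + 1)).map (· + 1) ++ (1 :: List.range' 0 (m + 2)) :=
            (range'_append_singleton le_rfl (by omega)).append_left _
        _ = (delta (m + 1) ++ [0]).map (· + 1) ++ List.range' 0 (m + 2) := by simp
        _ ≈ₚ (m :: delta (m + 1)).map (· + 1) ++ List.range' 0 (m + 2) :=
            ((ih (by omega)).map_add 1).append_right _
        _ ≈ₚ (m + 1) :: delta (m + 2) := (delta_succ_posEquiv (m + 1)).symm.cons _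
    · calc delta (m + 1) ++ [i + 1]
          = delta m ++ ((List.range' 0 (m + 1)).reverse ++ [i + 1]) := by simp [delta]
        _ ≈ₚ delta m ++ i :: (List.range' 0 (m + 1)).reverse :=
            (reverse_range'_append_singleton (Nat.zero_le i) (by omega)).append_left _
        _ = (delta m ++ [i]) ++ (List.range' 0 (m + 1)).reverse := by simp
        _ ≈ₚ j :: delta (m + 1) := (ih (by omega)).append_right _

theorem exists_delta_posEquiv_cons {m i : ℕ} (hi : i < m) : ∃ c, delta m ≈ₚ i :: c := by
  induction m with
  | zero => omega
  | succ m ih =>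
    rcases Nat.lt_or_ge i m with hlt | hge
    · obtain ⟨c, hc⟩ := ih hlt
      exact ⟨c ++ (List.range' 0 (m + 1)).reverse, hc.append_right _⟩
    obtain rfl : i = m := by omega
    -- `Δ` ends with the letter `0`, which `Δ` conjugates to `i`
    have hΔ : delta (i + 1) = (delta i ++ (List.range' 1 i).reverse) ++ [0] := by
      simp [delta, List.range'_succ]
    refine ⟨delta i ++ (List.range' 1 i).reverse, PosEquiv.cancel_right (t := [0]) ?_⟩
    calc delta (i + 1) ++ [0] ≈ₚ i :: delta (i + 1) := delta_append_singleton (by omega)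
      _ = _ := by rw [hΔ]; rfl

theorem exists_delta_posEquiv_append {m i : ℕ} (hi : i < m) : ∃ c, delta m ≈ₚ c ++ [i] := by
  obtain ⟨c, hc⟩ := exists_delta_posEquiv_cons (m := m) (i := m - 1 - i) (by omega)
  refine ⟨c, PosEquiv.cancel_cons (i := m - 1 - i) ?_⟩
  calc (m - 1 - i) :: delta m ≈ₚ delta m ++ [i] := (delta_append_singleton (by omega)).symm
    _ ≈ₚ (m - 1 - i) :: c ++ [i] := hc.append_right _

variable {m : ℕ}

/-- Letter `k` is read as the generator `σ_{k+1}` of `B_{m+1}⁺`; letters `k ≥ m` are read as `1`,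
a junk value: only words with letters `< m` are ever transferred. -/
def letter (m k : ℕ) : PresentedMonoid (braidMonoidRels m) :=
  if h : k < m then .of _ ⟨k, h⟩ else 1

def toMonoid (m : ℕ) (u : List ℕ) : PresentedMonoid (braidMonoidRels m) := (u.map (letter m)).prod

theorem toMonoid_append (u v : List ℕ) : toMonoid m (u ++ v) = toMonoid m u * toMonoid m v := by
  simp [toMonoid]

theorem letter_of_lt {k : ℕ} (hk : k < m) : letter m k = .of _ ⟨k, hk⟩ := dif_pos hk

theorem letter_val (i : Fin m) : letter m i = .of _ i := dif_pos i.isLt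

theorem toMonoid_cons (k : ℕ) (u : List ℕ) : toMonoid m (k :: u) = letter m k * toMonoid m u := by
  simp [toMonoid]

theorem toMonoid_singleton (k : ℕ) : toMonoid m [k] = letter m k := by
  simp [toMonoid]

theorem toMonoid_eq_of_step (h : Step u v) (hu : ∀ x ∈ u, x < m) : toMonoid m u = toMonoid m v := by
  cases h with
  | @swap i j p q hij =>
    have hi : i < m := hu i (by simp)
    have hj : j < m := hu j (by simp)
    suffices letter m i * letter m j = letter m j * letter m i by
      simp [toMonoid, ← mul_assoc, this]
    rw [letter_of_lt hi, letter_of_lt hj]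
    rcases hij with hij | hij
    exacts [of_mul_of_comm hij, (of_mul_of_comm hij).symm]
  | @braid i j p q hij =>
    have hi : i < m := hu i (by simp)
    have hj : j < m := hu j (by simp)
    suffices letter m i * letter m j * letter m i = letter m j * letter m i * letter m j by
      simp [toMonoid, ← mul_assoc, this]
    rw [letter_of_lt hi, letter_of_lt hj]
    rcases hij with hij | hij
    exacts [of_braid hij.symm, (of_braid hij.symm).symm]

theorem toMonoid_eq_of_posEquiv (h : u ≈ₚ v) (hu : ∀ x ∈ u, x < m) :
    toMonoid m u = toMonoid m v := by
  induction h with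
  | refl => rfl
  | tail huv hs ih =>
    exact ih.trans (toMonoid_eq_of_step hs fun x hx => hu x (PosEquiv.subset huv hx))

def toWord (x : FreeMonoid (Fin m)) : List ℕ := x.toList.map Fin.val

theorem toWord_mul (x y : FreeMonoid (Fin m)) : toWord (x * y) = toWord x ++ toWord y := by
  simp [toWord]

theorem lt_of_mem_toWord {x : FreeMonoid (Fin m)} {k : ℕ} (hk : k ∈ toWord x) : k < m := by
  obtain ⟨i, -, rfl⟩ := List.mem_map.1 hk
  exact i.isLt

theorem toMonoid_toWord (x : FreeMonoid (Fin m)) :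
    toMonoid m (toWord x) = PresentedMonoid.mk _ x := by
  induction x with
  | one => rfl
  | of i => simp [toWord, toMonoid, letter_of_lt i.isLt, PresentedMonoid.of]
  | mul x y hx hy => rw [toWord_mul, toMonoid_append, hx, hy, map_mul]

theorem posEquiv_of_conGen {x y : FreeMonoid (Fin m)} (h : conGen (braidMonoidRels m) x y) :
    toWord x ≈ₚ toWord y := by
  induction h with
  | of a b hab =>
    obtain ⟨i, j, ⟨hij, rfl, rfl⟩ | ⟨hij, rfl, rfl⟩⟩ := hab
    · simpa [toWord] using PosEquiv.swap (.inl hij) []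
    · simpa [toWord] using PosEquiv.braid (.inl hij.symm) []
  | refl => exact .rfl
  | symm _ ih => exact ih.symm
  | trans _ _ ih ih' => exact ih.trans ih'
  | mul _ _ ih ih' => rw [toWord_mul, toWord_mul]; exact ih.append ih'

theorem mk_eq_mk_iff_posEquiv {x y : FreeMonoid (Fin m)} :
    PresentedMonoid.mk (braidMonoidRels m) x = .mk _ y ↔ toWord x ≈ₚ toWord y := by
  refine ⟨fun h => posEquiv_of_conGen (PresentedMonoid.mk_eq_mk_iff.1 h), fun h => ?_⟩
  rw [← toMonoid_toWord, ← toMonoid_toWord]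
  exact toMonoid_eq_of_posEquiv h fun _ => lt_of_mem_toWord

end BraidWord

namespace BraidMonoid

open BraidWord (toMonoid toMonoid_append toMonoid_cons toMonoid_singleton letter_val toWord_mul
  mk_eq_mk_iff_posEquiv)

variable {m : ℕ}

instance : IsCancelMul (PresentedMonoid (braidMonoidRels m)) where
  mul_left_cancel a x y h := by
    induction a, x, y using PresentedMonoid.inductionOn₃ with
    | _ a x y =>
      dsimp only at h
      rw [← map_mul, ← map_mul, mk_eq_mk_iff_posEquiv, toWord_mul, toWord_mul] at h
      exact mk_eq_mk_iff_posEquiv.2 h.cancel_left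
  mul_right_cancel a x y h := by
    induction a, x, y using PresentedMonoid.inductionOn₃ with
    | _ a x y =>
      dsimp only at h
      rw [← map_mul, ← map_mul, mk_eq_mk_iff_posEquiv, toWord_mul, toWord_mul] at h
      exact mk_eq_mk_iff_posEquiv.2 h.cancel_right

def delta (m : ℕ) : PresentedMonoid (braidMonoidRels m) := toMonoid m (BraidWord.delta m)

theorem delta_mul_of (i : Fin m) : delta m * .of _ i = .of _ i.rev * delta m := by
  have h := BraidWord.toMonoid_eq_of_posEquiv (m := m)
    (BraidWord.delta_append_singleton (m := m) (i := i) (j := i.rev) (by simp; omega))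
    fun x hx => (List.mem_append.1 hx).elim BraidWord.lt_of_mem_delta
      fun hx => List.mem_singleton.1 hx ▸ i.isLt
  rwa [toMonoid_append, toMonoid_singleton, toMonoid_cons, letter_val, letter_val] at h

theorem exists_delta_eq_mul_of (i : Fin m) : ∃ c, delta m = c * .of _ i := by
  obtain ⟨c, hc⟩ := BraidWord.exists_delta_posEquiv_append i.isLt
  refine ⟨toMonoid m c, ?_⟩
  rw [delta, BraidWord.toMonoid_eq_of_posEquiv hc fun _ => BraidWord.lt_of_mem_delta,
    toMonoid_append, toMonoid_singleton, letter_val]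

theorem exists_delta_mul_eq (y : PresentedMonoid (braidMonoidRels m)) :
    ∃ y', delta m * y = y' * delta m := by
  induction y with | _ y
  induction y with
  | one => exact ⟨1, by simp⟩
  | of i => exact ⟨.of _ i.rev, delta_mul_of i⟩
  | mul x y hx hy =>
    obtain ⟨x', hx⟩ := hx
    obtain ⟨y', hy⟩ := hy
    exact ⟨x' * y', by rw [map_mul, ← mul_assoc, hx, mul_assoc, hy, mul_assoc]⟩

theorem exists_delta_pow_eq_mul (x : PresentedMonoid (braidMonoidRels m)) :
    ∃ k c, delta m ^ k = c * x := by
  induction x with | _ x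
  induction x using FreeMonoid.inductionOn' with
  | one => exact ⟨0, 1, by simp⟩
  | of_mul i x ih =>
    obtain ⟨k, c, hk⟩ := ih
    obtain ⟨c', hc'⟩ := exists_delta_mul_eq c
    obtain ⟨d, hd⟩ := exists_delta_eq_mul_of i
    refine ⟨k + 1, c' * d, ?_⟩
    rw [pow_succ', hk, ← mul_assoc, hc', hd, map_mul]
    simp only [mul_assoc]
    rfl

theorem exists_mul_eq_mul (x y : PresentedMonoid (braidMonoidRels m)) :
    ∃ a b, a * x = b * y := by
  obtain ⟨k, c, hc⟩ := exists_delta_pow_eq_mul x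
  obtain ⟨l, d, hd⟩ := exists_delta_pow_eq_mul y
  refine ⟨delta m ^ l * c, delta m ^ k * d, ?_⟩
  rw [mul_assoc, mul_assoc, ← hc, ← hd, ← pow_add, ← pow_add, add_comm]

end BraidMonoid

theorem braidMonoid_toGroup_injective_general (n : ℕ)
    (φ : BraidMonoid n →* BraidGroup n)
    (hφ : ∀ i : Fin (n - 1), φ (braidMonGen n i) = braidGen n i) :
    Function.Injective φ := by
  obtain ⟨G, _, ι, hι⟩ :=
    exists_injective_monoidHom_group (BraidMonoid.exists_mul_eq_mul (m := n - 1))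
  have hφι : (BraidMonoid.groupLift ι).comp φ = ι :=
    PresentedMonoid.ext _ fun i => (congrArg _ (hφ i)).trans (BraidMonoid.groupLift_of ι i)
  have hinj : Function.Injective ((BraidMonoid.groupLift ι).comp φ) := by
    rwa [hφι]
  exact Function.Injective.of_comp (f := BraidMonoid.groupLift ι) (g := φ) hinj

/-- (Garside) The canonical monoid homomorphism from the braid monoid `B_n⁺` to the braid
group `B_n`, sending each monoid generator `σᵢ` to the group generator `σᵢ`, is injective. -/
theorem braidMonoid_toGroup_injective (n : ℕ) (hn : 2 ≤ n)
    (φ : BraidMonoid n →* BraidGroup n)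
    (hφ : ∀ i : Fin (n - 1), φ (braidMonGen n i) = braidGen n i) :
    Function.Injective φ :=
  braidMonoid_toGroup_injective_general n φ hφ
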